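/- (Wielandt) If H and K are subnormal subgroups of a finite group G, then the join ⟨H, K⟩ is subnormal in G. -/

import Mathlib

/-- `H` is a subnormal subgroup of `G`. -/
def IsSubnormal {G : Type*} [Group G] (H : Subgroup G) : Prop :=
  ∃ (m : ℕ) (c : Fin (m + 1) → Subgroup G), c 0 = ⊤ ∧ c (Fin.last m) = H ∧
    ∀ i : Fin m, c i.succ ≤ c i.castSucc ∧
      ((c i.succ).subgroupOf (c i.castSucc)).Normal

/-!
Induction on `|G|`. If `K ≠ G`, then `K` lies in a proper normal subgroup `N`, which also contains
the conjugates of `K` by elements of `H`; these are subnormal in `N`, so by induction their join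
`M` is subnormal. Now `H` normalizes `M` and `H ⊔ K = M ⊔ H`, so it suffices to show that `A ⊔ B`
is subnormal whenever `A`, `B` are subnormal and `B` normalizes `A`. Again induct on `|G|`, with
`N` the normal closure of `A`: if `N ⊔ B < G`, work inside the subnormal subgroup `N ⊔ B`. If
`N ⊔ B = G`, every conjugate of `A` is already a conjugate by an element of `N`, so no proper
normal subgroup of `N` contains `A`; since `A` is subnormal in `N`, this forces `A = N`, and the
join of a normal and a subnormal subgroup is subnormal.
-/

namespace Subgroup

variable {G : Type*} [Group G] {A B H K L N Q X Y : Subgroup G}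

lemma card_lt_card_of_ne_top [Finite G] (h : H ≠ ⊤) : Nat.card H < Nat.card G := by
  obtain ⟨x, -, hx⟩ := SetLike.exists_of_lt h.lt_top
  exact Finite.card_subtype_lt hx

lemma map_conj_le_sup_left (K : Subgroup G) {h : G} (hh : h ∈ H) :
    K.map (MulAut.conj h : G →* G) ≤ H ⊔ K :=
  mem_normalizer_iff_map_conj_eq.mp (le_normalizer (mem_sup_left hh)) ▸ map_mono le_sup_right

lemma le_normalizer_iSup_map_conj (H K : Subgroup G) :
    H ≤ normalizer (⨆ h : H, K.map (MulAut.conj (h : G) : G →* G) : Subgroup G) := by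
  intro h hh
  have hcomp (x : G) :
      (MulAut.conj h : G →* G).comp (MulAut.conj x : G →* G) = (MulAut.conj (h * x) : G →* G) :=
    MonoidHom.ext fun y => by simp [mul_assoc]
  rw [mem_normalizer_iff_map_conj_eq, map_iSup]
  simp_rw [map_map, hcomp]
  exact (Equiv.mulLeft (⟨h, hh⟩ : H)).iSup_comp
    (g := fun x : H => K.map (MulAut.conj (x : G) : G →* G))

lemma normalClosure_le_of_sup_eq_top [N.Normal] (hNB : N ⊔ B = ⊤) (hBA : B ≤ normalizer A)
    (hAQ : A ≤ Q) (hNQ : N ≤ normalizer Q) : normalClosure (A : Set G) ≤ Q := by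
  rw [normalClosure, closure_le]
  intro x hx
  obtain ⟨a, ha, hax⟩ := Group.mem_conjugatesOfSet_iff.mp hx
  obtain ⟨g, rfl⟩ := isConj_iff.mp hax
  obtain ⟨n, hn, b, hb, rfl⟩ := mem_sup_of_normal_left.mp (hNB ▸ mem_top g : g ∈ N ⊔ B)
  have hbab : b * a * b⁻¹ ∈ Q := hAQ ((mem_normalizer_iff.mp (hBA hb) a).mp ha)
  simpa [mul_assoc] using (mem_normalizer_iff.mp (hNQ hn) _).mp hbab

namespace IsSubnormal

lemma sup_of_normal_left (hN : N.Normal) (hK : K.IsSubnormal) : (N ⊔ K).IsSubnormal := by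
  have := (hK.map (QuotientGroup.mk'_surjective N)).comap (QuotientGroup.mk' N)
  rwa [comap_map_eq, QuotientGroup.ker_mk', sup_comm] at this

lemma sup_of_subgroupOf (hX : X ≤ L) (hY : Y ≤ L) (hL : L.IsSubnormal)
    (h : (X.subgroupOf L ⊔ Y.subgroupOf L).IsSubnormal) : (X ⊔ Y).IsSubnormal := by
  rw [← subgroupOf_sup hX hY] at h
  exact h.trans (sup_le hX hY) hL

lemma map_conj (hK : K.IsSubnormal) (g : G) : (K.map (MulAut.conj g : G →* G)).IsSubnormal :=
  hK.map (MulAut.conj g).surjective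

lemma normal_of_normalClosure_sup_eq_top (hA : A.IsSubnormal) (hBA : B ≤ normalizer A)
    (hNB : normalClosure (A : Set G) ⊔ B = ⊤) : A.Normal := by
  set N := normalClosure (A : Set G)
  have hAN : A ≤ N := le_normalClosure
  suffices A.subgroupOf N = ⊤ by
    rw [le_antisymm hAN (subgroupOf_eq_top.mp this)]
    exact normalClosure_normal
  by_contra hne
  obtain ⟨Q, hQ, hAQ, hQtop⟩ := hA.subgroupOf.exists_normal_and_le_and_lt_top_of_ne hne
  have hNQ : N ≤ Q.map N.subtype := by
    refine normalClosure_le_of_sup_eq_top hNB hBA ?_ ?_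
    · simpa [map_subgroupOf_eq_of_le hAN] using map_mono (f := N.subtype) hAQ
    · simpa [normalizer_eq_top, ← MonoidHom.range_eq_map] using le_normalizer_map (H := Q) N.subtype
  exact hQtop.ne (top_le_iff.mp ((map_le_map_iff_of_injective N.subtype_injective).mp
    (by simpa [← MonoidHom.range_eq_map] using hNQ)))

lemma sup_of_le_normalizer [Finite G] (hA : A.IsSubnormal) (hB : B.IsSubnormal)
    (hBA : B ≤ normalizer A) : (A ⊔ B).IsSubnormal := by
  induction hG : Nat.card G using Nat.strong_induction_on generalizing G with
  | _ n ih =>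
  obtain rfl | hAtop := eq_or_ne A ⊤
  · simp
  set N := normalClosure (A : Set G)
  by_cases hNB : N ⊔ B = ⊤
  · exact sup_of_normal_left (hA.normal_of_normalClosure_sup_eq_top hBA hNB) hB
  have hAT : A ≤ N ⊔ B := le_normalClosure.trans le_sup_left
  refine sup_of_subgroupOf hAT le_sup_right (sup_of_normal_left normalClosure_normal hB) ?_
  refine ih _ (hG ▸ card_lt_card_of_ne_top hNB) hA.subgroupOf hB.subgroupOf ?_ rfl
  rw [← subgroupOf_normalizer_eq hAT]
  exact subgroupOf_mono _ hBA

lemma sup [Finite G] (hH : H.IsSubnormal) (hK : K.IsSubnormal) : (H ⊔ K).IsSubnormal := by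
  induction hG : Nat.card G using Nat.strong_induction_on generalizing G with
  | _ n ih =>
  obtain rfl | hKtop := eq_or_ne K ⊤
  · simp
  obtain ⟨N, hN, hKN, hNtop⟩ := hK.exists_normal_and_le_and_lt_top_of_ne hKtop
  have hsup {X Y : Subgroup G} (hX : X ≤ N ∧ X.IsSubnormal) (hY : Y ≤ N ∧ Y.IsSubnormal) :
      X ⊔ Y ≤ N ∧ (X ⊔ Y).IsSubnormal :=
    ⟨sup_le hX.1 hY.1, sup_of_subgroupOf hX.1 hY.1 hN.isSubnormal
      (ih _ (hG ▸ card_lt_card_of_ne_top hNtop.ne) hX.2.subgroupOf hY.2.subgroupOf rfl)⟩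
  have : Fintype H := Fintype.ofFinite H
  set M := ⨆ h : H, K.map (MulAut.conj (h : G) : G →* G) with hM_def
  have hM : M ≤ N ∧ M.IsSubnormal := by
    rw [hM_def, ← Finset.sup_univ_eq_iSup]
    refine Finset.sup_induction (p := fun X => X ≤ N ∧ X.IsSubnormal) ⟨bot_le, bot⟩
      (fun X hX Y hY => hsup hX hY) fun h _ => ⟨?_, hK.map_conj h⟩
    exact Normal.map_conj_eq N (h : G) ▸ map_mono hKN
  have hHK : H ⊔ K = M ⊔ H := by
    refine le_antisymm (sup_le le_sup_right ?_)
      (sup_le (iSup_le fun h => map_conj_le_sup_left K h.2) le_sup_left)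
    exact (le_iSup_of_le 1 fun k hk => ⟨k, hk, by simp⟩).trans le_sup_left
  rw [hHK]
  exact hM.2.sup_of_le_normalizer hH (le_normalizer_iSup_map_conj H K)

end IsSubnormal

end Subgroup

lemma isSubnormal_iff_subgroup_isSubnormal {G : Type*} [Group G] {H : Subgroup G} :
    IsSubnormal H ↔ H.IsSubnormal := by
  constructor
  · rintro ⟨m, c, hc0, hcm, hc⟩
    have hsub (i : Fin (m + 1)) : (c i).IsSubnormal :=
      Fin.induction (hc0 ▸ .top) (fun i hi => .step _ _ (hc i).1 hi (hc i).2) i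
    exact hcm ▸ hsub (Fin.last m)
  · intro h
    induction h with
    | top => exact ⟨0, fun _ => ⊤, rfl, rfl, fun i => i.elim0⟩
    | step H K hHK _ hN ih =>
      obtain ⟨m, c, hc0, hcm, hc⟩ := ih
      refine ⟨m + 1, Fin.snoc c H, by simpa using hc0, Fin.snoc_last _ _, fun i => ?_⟩
      refine Fin.lastCases ?_ (fun j => ?_) i
      · rw [Fin.succ_last, Fin.snoc_last, Fin.snoc_castSucc, hcm]
        exact ⟨hHK, hN⟩
      · rw [Fin.succ_castSucc, Fin.snoc_castSucc, Fin.snoc_castSucc]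
        exact hc j

/-- Wielandt's join theorem: in a finite group, the join of two subnormal
subgroups is subnormal. -/
theorem wielandt_join {G : Type*} [Group G] [Finite G] (H K : Subgroup G)
    (hH : IsSubnormal H) (hK : IsSubnormal K) : IsSubnormal (H ⊔ K) :=
  isSubnormal_iff_subgroup_isSubnormal.mpr
    ((isSubnormal_iff_subgroup_isSubnormal.mp hH).sup (isSubnormal_iff_subgroup_isSubnormal.mp hK))
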